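/- Let a, b be distinct positive real numbers, m ∈ ℝ, and κ ∈ ℝ. Then the Euclidean ray {w ∈ H² : Re(w) = κ·Im(w)} through the origin meets the square hyperbola S_m(aI, bI) in at most one point; that is, if w, w' ∈ H² satisfy Re(w) = κ·Im(w), Re(w') = κ·Im(w'), d(w,aI)² − d(w,bI)² = m, and d(w',aI)² − d(w',bI)² = m, then w = w'. -/

import Mathlib

open UpperHalfPlane

noncomputable section

/-- The point of the upper half-plane with complex coordinate `a·i`, for `a > 0`. -/
def ptI (a : ℝ) (ha : 0 < a) : UpperHalfPlane := ⟨a * Complex.I, by simpa using ha⟩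

/-!
On the ray `Re w = κ Im w` put `c = √(1 + κ²)`, the hyperbolic cosine of the distance from the
ray to the imaginary axis, and `σ = log (c Im w)`, the arclength coordinate of the foot of the
perpendicular from `w` to that axis. Hyperbolic Pythagoras gives
`cosh d(w, aI) = c cosh (σ - log a)`, so `d(w, aI)² - d(w, bI)² = h (σ - log a) - h (σ - log b)`
with `h x = arcosh (c cosh x)²`. The function `h` is strictly convex, so its increments over
intervals of a fixed length increase strictly; hence the difference is strictly monotone in `σ`
and takes the value `m` at most once.
-/

open Real Set

theorem StrictConvexOn.strictMono_sub_comp_add {f : ℝ → ℝ} (hf : StrictConvexOn ℝ univ f)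
    {δ : ℝ} (hδ : 0 < δ) : StrictMono fun x => f (x + δ) - f x := by
  intro x y hxy
  have h₁ := hf.secant_strict_mono (mem_univ x) (mem_univ (x + δ)) (mem_univ (y + δ))
    (by linarith) (by linarith) (by linarith : x + δ < y + δ)
  have h₂ := hf.secant_strict_mono (mem_univ (y + δ)) (mem_univ x) (mem_univ y)
    (by linarith) (by linarith) hxy
  rw [add_sub_cancel_left] at h₁
  rw [← neg_div_neg_eq, ← neg_div_neg_eq (f y - _)] at h₂
  simp only [neg_sub, add_sub_cancel_left] at h₂
  exact (div_lt_div_iff_of_pos_right hδ).1 (h₁.trans h₂)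

theorem StrictConvexOn.injective_comp_sub_sub_comp_sub {f : ℝ → ℝ}
    (hf : StrictConvexOn ℝ univ f) {α β : ℝ} (hαβ : α ≠ β) :
    Function.Injective fun σ => f (σ - α) - f (σ - β) := by
  wlog hlt : α < β generalizing α β
  · intro σ σ' h
    exact this hαβ.symm (hαβ.lt_or_gt.resolve_left hlt) (by dsimp only at h ⊢; linarith)
  refine StrictMono.injective fun σ σ' hσ => ?_
  have := hf.strictMono_sub_comp_add (sub_pos.2 hσ) (by linarith : σ - β < σ - α)
  simp only [sub_add_sub_cancel'] at this
  linarith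

section ArcoshMulCosh

variable {c : ℝ}

theorem hasDerivAt_arcosh_mul_cosh (hc : 1 < c) (x : ℝ) :
    HasDerivAt (fun x => arcosh (c * cosh x)) (c * sinh x / √((c * cosh x) ^ 2 - 1)) x := by
  have hu : 1 < c * cosh x := one_lt_mul_of_lt_of_le hc (one_le_cosh x)
  rw [div_eq_inv_mul]
  exact (hasDerivAt_arcosh hu).comp (h₂ := arcosh) x ((hasDerivAt_cosh x).const_mul c)

theorem strictMonoOn_arcosh_mul_cosh (hc : 0 < c) :
    StrictMonoOn (fun x => arcosh (c * cosh x)) (Ici 0) := fun x hx y hy hxy =>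
  (arcosh_lt_arcosh (by positivity) (by positivity)).2 <|
    mul_lt_mul_of_pos_left (cosh_lt_cosh.2 <| by rwa [abs_of_nonneg hx, abs_of_nonneg hy]) hc

theorem monotoneOn_mul_sinh_div_sqrt (hc : 1 ≤ c) :
    MonotoneOn (fun x => c * sinh x / √((c * cosh x) ^ 2 - 1)) (Ici 0) := by
  intro x hx y hy hxy
  have hW : ∀ z, (c * cosh z) ^ 2 - 1 = c ^ 2 * sinh z ^ 2 + (c ^ 2 - 1) := fun z => by
    rw [mul_pow, cosh_sq]; ring
  have hc2 : 0 ≤ c ^ 2 - 1 := by nlinarith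
  have hsx : 0 ≤ sinh x := sinh_nonneg_iff.2 hx
  have hsxy : sinh x ≤ sinh y := sinh_le_sinh.2 hxy
  simp only [mul_div_assoc]
  refine mul_le_mul_of_nonneg_left ?_ (by linarith)
  rcases eq_or_lt_of_le hsx with h0 | hpos
  · rw [← h0, zero_div]
    exact div_nonneg (hsx.trans hsxy) (sqrt_nonneg _)
  have hWx : 0 < (c * cosh x) ^ 2 - 1 := by rw [hW]; nlinarith [pow_pos hpos 2]
  have hWy : 0 < (c * cosh y) ^ 2 - 1 := by rw [hW]; nlinarith [pow_pos (hpos.trans_le hsxy) 2]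
  rw [div_le_div_iff₀ (sqrt_pos.2 hWx) (sqrt_pos.2 hWy),
    ← pow_le_pow_iff_left₀ (by positivity) (mul_nonneg (hsx.trans hsxy) (sqrt_nonneg _))
      two_ne_zero, mul_pow (sinh x), mul_pow (sinh y), sq_sqrt hWx.le, sq_sqrt hWy.le, hW, hW]
  nlinarith [mul_le_mul_of_nonneg_left (pow_le_pow_left₀ hsx hsxy 2) hc2]

theorem strictMono_arcosh_mul_cosh_mul_sinh_div_sqrt (hc : 1 ≤ c) :
    StrictMono fun x => arcosh (c * cosh x) * (c * sinh x / √((c * cosh x) ^ 2 - 1)) := by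
  refine strictMono_of_odd_strictMonoOn_nonneg (fun x => ?_) fun x hx y hy hxy => ?_
  · rw [cosh_neg, sinh_neg]; ring
  have hy₀ : 0 < y := lt_of_le_of_lt hx hxy
  have hcy : 1 < c * cosh y := one_lt_mul_of_le_of_lt hc (one_lt_cosh.2 hy₀.ne')
  have hBy : 0 < c * sinh y / √((c * cosh y) ^ 2 - 1) :=
    div_pos (mul_pos (by linarith) (sinh_pos_iff.2 hy₀)) (sqrt_pos.2 (by nlinarith))
  calc arcosh (c * cosh x) * (c * sinh x / √((c * cosh x) ^ 2 - 1))
      ≤ arcosh (c * cosh x) * (c * sinh y / √((c * cosh y) ^ 2 - 1)) :=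
        mul_le_mul_of_nonneg_left (monotoneOn_mul_sinh_div_sqrt hc hx hy hxy.le)
          (arcosh_nonneg (one_le_mul_of_one_le_of_one_le hc (one_le_cosh x)))
    _ < arcosh (c * cosh y) * (c * sinh y / √((c * cosh y) ^ 2 - 1)) :=
        mul_lt_mul_of_pos_right (strictMonoOn_arcosh_mul_cosh (by linarith) hx hy hxy) hBy

theorem strictConvexOn_arcosh_mul_cosh_sq (hc : 1 ≤ c) :
    StrictConvexOn ℝ univ fun x => arcosh (c * cosh x) ^ 2 := by
  rcases hc.eq_or_lt with rfl | hc
  · have hsq : (fun x => arcosh (1 * cosh x) ^ 2) = fun x => x ^ 2 := funext fun x => by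
      rw [one_mul, ← cosh_abs, arcosh_cosh (abs_nonneg x), sq_abs]
    exact hsq ▸ Even.strictConvexOn_pow even_two two_ne_zero
  have hderiv : ∀ x, HasDerivAt (fun x => arcosh (c * cosh x) ^ 2)
      (2 * (arcosh (c * cosh x) * (c * sinh x / √((c * cosh x) ^ 2 - 1)))) x := fun x =>
    ((hasDerivAt_arcosh_mul_cosh hc x).fun_pow 2).congr_deriv (by push_cast; ring)
  refine StrictMono.strictConvexOn_univ_of_deriv
    (continuous_iff_continuousAt.2 fun x => (hderiv x).continuousAt) ?_
  rw [funext fun x => (hderiv x).deriv]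
  exact (strictMono_arcosh_mul_cosh_mul_sinh_div_sqrt hc.le).const_mul two_pos

end ArcoshMulCosh

theorem ptI_re (a : ℝ) (ha : 0 < a) : (ptI a ha).re = 0 := by simp [ptI, UpperHalfPlane.re]

theorem ptI_im (a : ℝ) (ha : 0 < a) : (ptI a ha).im = a := by simp [ptI, UpperHalfPlane.im]

theorem cosh_dist_ptI_of_re_eq_mul_im {κ : ℝ} {w : ℍ} (hw : w.re = κ * w.im) {a : ℝ}
    (ha : 0 < a) :
    cosh (dist w (ptI a ha)) = √(1 + κ ^ 2) * cosh (log (√(1 + κ ^ 2) * w.im) - log a) := by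
  have hc : 0 < √(1 + κ ^ 2) := sqrt_pos.2 (by positivity)
  have ht := w.im_pos
  rw [cosh_dist', ptI_re, ptI_im, hw, ← log_div (by positivity) ha.ne', cosh_log (by positivity)]
  field_simp
  rw [sq_sqrt (by positivity)]
  ring

theorem dist_ptI_of_re_eq_mul_im {κ : ℝ} {w : ℍ} (hw : w.re = κ * w.im) {a : ℝ} (ha : 0 < a) :
    dist w (ptI a ha) = arcosh (√(1 + κ ^ 2) * cosh (log (√(1 + κ ^ 2) * w.im) - log a)) := by
  rw [← cosh_dist_ptI_of_re_eq_mul_im hw ha, arcosh_cosh dist_nonneg]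

/-- A Euclidean ray `Re(w) = κ·Im(w)` through the origin meets a square hyperbola
`S_m(aI, bI)` in at most one point. -/
theorem ray_meets_squareHyperbola_once (a b : ℝ) (ha : 0 < a) (hb : 0 < b)
    (hab : a ≠ b) (m κ : ℝ) (w w' : UpperHalfPlane)
    (hw : w.re = κ * w.im) (hw' : w'.re = κ * w'.im)
    (hSw : dist w (ptI a ha) ^ 2 - dist w (ptI b hb) ^ 2 = m)
    (hSw' : dist w' (ptI a ha) ^ 2 - dist w' (ptI b hb) ^ 2 = m) :
    w = w' := by
  have hc : 1 ≤ √(1 + κ ^ 2) := one_le_sqrt.2 (by nlinarith)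
  rw [dist_ptI_of_re_eq_mul_im hw, dist_ptI_of_re_eq_mul_im hw] at hSw
  rw [dist_ptI_of_re_eq_mul_im hw', dist_ptI_of_re_eq_mul_im hw'] at hSw'
  have hlog : log (√(1 + κ ^ 2) * w.im) = log (√(1 + κ ^ 2) * w'.im) :=
    (strictConvexOn_arcosh_mul_cosh_sq hc).injective_comp_sub_sub_comp_sub
      (fun h => hab (log_injOn_pos ha hb h)) (hSw.trans hSw'.symm)
  have him : w.im = w'.im := mul_left_cancel₀ (by positivity) <|
    log_injOn_pos (mul_pos (by positivity) w.im_pos) (mul_pos (by positivity) w'.im_pos) hlog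
  exact ext_re_im (by rw [hw, hw', him]) him
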